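/- arXiv:1004.2996 — 6 statements merged into one kernel-verified Lean document; each statement's English description precedes it below -/
import Mathlib

section
/- If p is a prime with p ≡ 1 (mod 4), then the Pell-type equation x² − p·y² = −1 has a solution in integers x, y. -/
/-!
Let `(x, y)` be the fundamental solution of `x² - p y² = 1`. Reducing mod 4 with `p ≡ 1` forces
`y` even and `x` odd, so `x = 2a + 1`, `y = 2c` with `a (a + 1) = p c²`. Since `a` and `a + 1`
are coprime, either `a = p u²`, `a + 1 = v²`, and then `v² - p u² = 1` with `1 < v < x`
contradicts minimality, or `a = u²`, `a + 1 = p v²`, and then `u² - p v² = -1`.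
-/

theorem Nat.Coprime.exists_eq_prime_mul_sq_of_mul_eq {p m n c : ℕ} (hp : p.Prime)
    (hmn : m.Coprime n) (h : m * n = p * c ^ 2) (hpm : p ∣ m) :
    ∃ u v, m = p * u ^ 2 ∧ n = v ^ 2 := by
  obtain ⟨w, rfl⟩ := hpm
  have hw : w * n = c ^ 2 := Nat.eq_of_mul_eq_mul_left hp.pos (by rw [← h, mul_assoc])
  have hwn : w.Coprime n := hmn.coprime_dvd_left (Dvd.intro_left p rfl)
  obtain ⟨u, rfl⟩ := exists_eq_pow_of_mul_eq_pow (Nat.isUnit_iff.mpr hwn) hw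
  obtain ⟨v, rfl⟩ :=
    exists_eq_pow_of_mul_eq_pow (Nat.isUnit_iff.mpr hwn.symm) ((mul_comm _ _).trans hw)
  exact ⟨u, v, rfl, rfl⟩

theorem Nat.Coprime.prime_mul_sq_cases {p m n c : ℕ} (hp : p.Prime) (hmn : m.Coprime n)
    (h : m * n = p * c ^ 2) :
    (∃ u v, m = p * u ^ 2 ∧ n = v ^ 2) ∨ (∃ u v, m = u ^ 2 ∧ n = p * v ^ 2) := by
  rcases hp.dvd_mul.mp ⟨c ^ 2, h⟩ with hpm | hpn
  · exact Or.inl (hmn.exists_eq_prime_mul_sq_of_mul_eq hp h hpm)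
  · obtain ⟨v, u, hn, hm⟩ :=
      hmn.symm.exists_eq_prime_mul_sq_of_mul_eq hp (by rw [mul_comm, h]) hpn
    exact Or.inr ⟨u, v, hm, hn⟩

theorem Int.even_of_sq_sub_mul_sq_eq_one {d x y : ℤ} (hd : d % 4 = 1)
    (h : x ^ 2 - d * y ^ 2 = 1) : Even y := by
  have hd4 : (d : ZMod 4) = 1 := by
    rw [← ZMod.intCast_mod, Nat.cast_ofNat, hd, Int.cast_one]
  have h4 : (x : ZMod 4) ^ 2 - (y : ZMod 4) ^ 2 = 1 := by
    simpa [hd4] using congrArg (Int.cast : ℤ → ZMod 4) h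
  have h2y : ((2 * y : ℤ) : ZMod 4) = 0 := by
    push_cast
    generalize (x : ZMod 4) = a at h4
    generalize (y : ZMod 4) = b at h4 ⊢
    revert a b
    decide
  obtain ⟨k, hk⟩ := (ZMod.intCast_zmod_eq_zero_iff_dvd _ 4).mp h2y
  exact ⟨k, by omega⟩

theorem Pell.Solution₁.exists_eq_two_mul_add_one_of_mod_four_eq_one {p : ℕ} (hp : p % 4 = 1)
    (s : Solution₁ (p : ℤ)) (hx : 0 < s.x) (hy : 0 ≤ s.y) :
    ∃ a c : ℕ, s.x = 2 * a + 1 ∧ s.y = 2 * c ∧ a * (a + 1) = p * c ^ 2 := by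
  obtain ⟨c, hc⟩ := Int.even_of_sq_sub_mul_sq_eq_one (by omega) s.prop
  lift c to ℕ using (by omega)
  have h := s.prop
  rw [hc] at h
  rcases Int.even_or_odd' s.x with ⟨a, ha | ha⟩
  · rw [ha] at h
    have h4 : 4 * (a ^ 2 - p * c ^ 2) = 1 := by linear_combination h
    omega
  · lift a to ℕ using (by omega)
    refine ⟨a, c, ha, by omega, ?_⟩
    rw [ha] at h
    have h4 : (4 : ℤ) * (a * (a + 1)) = 4 * (p * c ^ 2) := by linear_combination h
    exact_mod_cast mul_left_cancel₀ four_ne_zero h4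

theorem pell_neg_one_of_prime_one_mod_four (p : ℕ) (hp : p.Prime) (hmod : p % 4 = 1) :
    ∃ x y : ℤ, x ^ 2 - (p : ℤ) * y ^ 2 = -1 := by
  obtain ⟨s, hs⟩ := Pell.IsFundamental.exists_of_not_isSquare (by exact_mod_cast hp.pos)
    (Nat.prime_iff_prime_int.mp hp).not_isSquare
  obtain ⟨a, c, hx, -, hac⟩ :=
    s.exists_eq_two_mul_add_one_of_mod_four_eq_one hmod hs.x_pos hs.2.1.le
  rcases (Nat.coprime_self_add_right.mpr (Nat.coprime_one_right a)).prime_mul_sq_cases hp hac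
    with ⟨u, v, ha, ha1⟩ | ⟨u, v, ha, ha1⟩
  · have hsol : (v : ℤ) ^ 2 - p * u ^ 2 = 1 := by
      linear_combination (by exact_mod_cast ha : (a : ℤ) = p * u ^ 2) -
        (by exact_mod_cast ha1 : (a : ℤ) + 1 = v ^ 2)
    have ha0 : 0 < a := by have := hs.1; omega
    have hv : 1 < v := by nlinarith
    have hle : s.x ≤ v := hs.x_le_x (a := .mk v u hsol) (by simpa using hv)
    nlinarith
  · exact ⟨u, v, by linear_combination (by exact_mod_cast ha1 : (a : ℤ) + 1 = p * v ^ 2) -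
      (by exact_mod_cast ha : (a : ℤ) = u ^ 2)⟩
end

section
/- If p is a prime with p ≡ 7 (mod 8), then the equation x² − p·y² = 2 has a solution in integers x, y. -/
/-!
Let `(x, y)` be the fundamental solution of `x² - p y² = 1`. If `x` were odd, then `y` is even and
`k (k + 1) = p (y / 2)²` with `x = 2k + 1`; as `k` and `k + 1` are coprime, either
`k + 1 = u²`, `k = p v²`, a smaller solution `(u, v)`, or `k = u²`, `k + 1 = p v²`, making `-1` a
square mod `p`. So `x` is even, `x - 1` and `x + 1` are coprime with product `p y²`, and either
`x + 1 = u²`, `x - 1 = p v²`, giving `u² - p v² = 2`, or `x - 1 = u²`, `x + 1 = p v²`, making `-2`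
a square mod `p`. Neither `-1` nor `-2` is a square mod `p ≡ 7 (mod 8)`.
-/

namespace Int

theorem exists_eq_sq_of_isCoprime_of_mul_eq_sq {s t c : ℤ} (hs : 0 ≤ s) (hst : IsCoprime s t)
    (h : s * t = c ^ 2) : ∃ a, s = a ^ 2 := by
  obtain ⟨a, ha | ha⟩ := sq_of_isCoprime hst h
  · exact ⟨a, ha⟩
  · exact ⟨a, by linarith [sq_nonneg a]⟩

theorem exists_eq_mul_sq_and_eq_sq_of_dvd {m s t c : ℤ} (hm : 0 < m) (hs : 0 < s) (ht : 0 < t)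
    (hst : IsCoprime s t) (h : s * t = m * c ^ 2) (hms : m ∣ s) :
    ∃ a b, s = m * b ^ 2 ∧ t = a ^ 2 := by
  obtain ⟨s', rfl⟩ := hms
  have hs' : s' * t = c ^ 2 := mul_left_cancel₀ hm.ne' (by rw [← h, mul_assoc])
  obtain ⟨b, hb⟩ := exists_eq_sq_of_isCoprime_of_mul_eq_sq (pos_of_mul_pos_right hs hm.le).le
    hst.of_mul_left_right hs'
  obtain ⟨a, ha⟩ := exists_eq_sq_of_isCoprime_of_mul_eq_sq ht.le hst.of_mul_left_right.symm
    (by rw [mul_comm, hs'])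
  exact ⟨a, b, by rw [hb], ha⟩

theorem exists_eq_mul_sq_and_eq_sq_or_eq_sq_and_eq_mul_sq {p s t c : ℤ} (hp : Prime p)
    (hp0 : 0 < p) (hs : 0 < s) (ht : 0 < t) (hst : IsCoprime s t) (h : s * t = p * c ^ 2) :
    (∃ a b, s = p * b ^ 2 ∧ t = a ^ 2) ∨ (∃ a b, s = a ^ 2 ∧ t = p * b ^ 2) := by
  rcases hp.dvd_or_dvd ⟨c ^ 2, h⟩ with hps | hpt
  · exact .inl (exists_eq_mul_sq_and_eq_sq_of_dvd hp0 hs ht hst h hps)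
  · obtain ⟨a, b, ht', hs'⟩ :=
      exists_eq_mul_sq_and_eq_sq_of_dvd hp0 ht hs hst.symm (by rw [mul_comm, h]) hpt
    exact .inr ⟨a, b, hs', ht'⟩

end Int

theorem ZMod.isSquare_neg_of_dvd_sq_add {p : ℕ} {a n : ℤ} (h : (p : ℤ) ∣ a ^ 2 + n) :
    IsSquare (-(n : ZMod p)) := by
  rw [← ZMod.intCast_zmod_eq_zero_iff_dvd] at h
  push_cast at h
  exact ⟨a, by linear_combination -h⟩

namespace Pell

theorem Solution₁.exists_sq_sub_mul_sq_eq_two_of_even_x {p : ℕ} (hp : p.Prime)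
    (hneg2 : ¬IsSquare (-2 : ZMod p)) {a : Solution₁ (p : ℤ)} (hx1 : 1 < a.x) (hx : Even a.x) :
    ∃ x y : ℤ, x ^ 2 - p * y ^ 2 = 2 := by
  obtain ⟨k, hk⟩ := hx
  have hcop : IsCoprime (a.x - 1) (a.x + 1) := ⟨k, -(k - 1), by rw [hk]; ring⟩
  have hfac : (a.x - 1) * (a.x + 1) = p * a.y ^ 2 := by linear_combination a.prop
  rcases Int.exists_eq_mul_sq_and_eq_sq_or_eq_sq_and_eq_mul_sq (Nat.prime_iff_prime_int.mp hp)
    (by exact_mod_cast hp.pos) (by linarith) (by linarith) hcop hfac with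
    ⟨u, v, hu, hv⟩ | ⟨u, v, hu, hv⟩
  · exact ⟨u, v, by linear_combination hu - hv⟩
  · have hdvd : (p : ℤ) ∣ u ^ 2 + 2 := ⟨v ^ 2, by linear_combination hv - hu⟩
    exact absurd (by simpa using ZMod.isSquare_neg_of_dvd_sq_add hdvd) hneg2

theorem IsFundamental.even_x {p : ℕ} (hp : p.Prime) (hneg1 : ¬IsSquare (-1 : ZMod p))
    {a : Solution₁ (p : ℤ)} (ha : IsFundamental a) : Even a.x := by
  by_contra hx
  obtain ⟨k, hk⟩ := Int.not_even_iff_odd.mp hx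
  have hp_odd : Odd (p : ℤ) := by
    rcases hp.eq_two_or_odd' with rfl | hodd
    · exact absurd ⟨1, by decide⟩ hneg1
    · exact_mod_cast hodd
  obtain ⟨c, hc⟩ : Even a.y := by
    have hpy : Even ((p : ℤ) * a.y ^ 2) :=
      ⟨2 * k ^ 2 + 2 * k, by linear_combination -a.prop + (a.x + 2 * k + 1) * hk⟩
    exact (Int.even_pow' two_ne_zero).mp
      ((Int.even_mul.mp hpy).resolve_left (Int.not_even_iff_odd.mpr hp_odd))
  have hk0 : 0 < k := by linarith [ha.1]
  have hfac : k * (k + 1) = p * c ^ 2 := by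
    have := a.prop
    rw [hk, hc] at this
    linarith
  rcases Int.exists_eq_mul_sq_and_eq_sq_or_eq_sq_and_eq_mul_sq (Nat.prime_iff_prime_int.mp hp)
    (by exact_mod_cast hp.pos) hk0 (by linarith) ⟨-1, 1, by ring⟩ hfac with
    ⟨u, v, hu, hv⟩ | ⟨u, v, hu, hv⟩
  · -- `(|u|, v)` is a solution with `1 < |u| < x`
    have hsol : |u| ^ 2 - p * v ^ 2 = 1 := by rw [sq_abs]; linear_combination hu - hv
    have hu1 : 1 < |u| := by nlinarith [abs_nonneg u, sq_abs u]
    have hle := ha.x_le_x (a := Solution₁.mk |u| v hsol) (by rwa [Solution₁.x_mk])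
    rw [Solution₁.x_mk] at hle
    nlinarith [abs_nonneg u, sq_abs u]
  · have hdvd : (p : ℤ) ∣ u ^ 2 + 1 := ⟨v ^ 2, by linear_combination hv - hu⟩
    exact hneg1 (by simpa using ZMod.isSquare_neg_of_dvd_sq_add hdvd)

end Pell

theorem pell_two_of_prime_seven_mod_eight (p : ℕ) (hp : p.Prime) (hmod : p % 8 = 7) :
    ∃ x y : ℤ, x ^ 2 - (p : ℤ) * y ^ 2 = 2 := by
  have := Fact.mk hp
  have hneg1 : ¬IsSquare (-1 : ZMod p) := by rw [ZMod.exists_sq_eq_neg_one_iff]; omega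
  have hneg2 : ¬IsSquare (-2 : ZMod p) := by rw [ZMod.exists_sq_eq_neg_two_iff (by omega)]; omega
  obtain ⟨a, ha⟩ := Pell.IsFundamental.exists_of_not_isSquare (by exact_mod_cast hp.pos)
    (Nat.prime_iff_prime_int.mp hp).not_isSquare
  exact a.exists_sq_sub_mul_sq_eq_two_of_even_x hp hneg2 ha.1 (ha.even_x hp hneg1)
end

section
/- If p is a prime with p ≡ 3 (mod 8), then the equation x² − p·y² = −2 has a solution in integers x, y. -/
/-!
Let `(a, b)` be the fundamental solution of `a² - p b² = 1`. If `a` were odd, writing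
`a = 2m + 1`, `b = 2c` gives `m (m + 1) = p c²` with coprime factors, so either
`m = u²`, `m + 1 = p v²`, i.e. `u² - p v² = -1`, impossible modulo 4, or `m + 1 = v²`,
`m = p u²`, a solution with `1 < |v| < a`, contradicting minimality. Hence `a` is even and
`(a - 1)(a + 1) = p b²` with coprime factors: either `a - 1 = u²`, `a + 1 = p v²`, which is
the required `u² - p v² = -2`, or `v² - p u² = 2`, impossible modulo 8.
-/

namespace Int

theorem eq_sq_of_isCoprime_of_mul_eq_sq {a b c : ℤ} (h : IsCoprime a b) (ha : 0 ≤ a)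
    (heq : a * b = c ^ 2) : ∃ u, a = u ^ 2 := by
  obtain ⟨u, hu | hu⟩ := sq_of_isCoprime h heq
  · exact ⟨u, hu⟩
  · exact ⟨u, by linarith [sq_nonneg u]⟩

theorem exists_eq_sq_of_isCoprime_of_mul_eq_prime_mul_sq {p : ℕ} (hp : p.Prime) {m n c : ℤ}
    (h : IsCoprime m n) (hm : 0 ≤ m) (hn : 0 ≤ n) (heq : m * n = p * c ^ 2) (hdvd : (p : ℤ) ∣ n) :
    ∃ u v, m = u ^ 2 ∧ n = p * v ^ 2 := by
  obtain ⟨k, rfl⟩ := hdvd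
  have hp0 : (0 : ℤ) < p := by exact_mod_cast hp.pos
  have hk : m * k = c ^ 2 := mul_left_cancel₀ hp0.ne' (by linear_combination heq)
  have hco : IsCoprime m k := h.of_isCoprime_of_dvd_right (dvd_mul_left k p)
  obtain ⟨u, rfl⟩ := eq_sq_of_isCoprime_of_mul_eq_sq hco hm hk
  obtain ⟨v, rfl⟩ := eq_sq_of_isCoprime_of_mul_eq_sq hco.symm (nonneg_of_mul_nonneg_right hn hp0)
    (by rw [mul_comm, hk])
  exact ⟨u, v, rfl, rfl⟩

theorem exists_eq_sq_or_of_isCoprime_of_mul_eq_prime_mul_sq {p : ℕ} (hp : p.Prime) {m n c : ℤ}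
    (h : IsCoprime m n) (hm : 0 ≤ m) (hn : 0 ≤ n) (heq : m * n = p * c ^ 2) :
    (∃ u v, m = u ^ 2 ∧ n = p * v ^ 2) ∨ ∃ u v, m = p * u ^ 2 ∧ n = v ^ 2 := by
  rcases Prime.dvd_mul' hp ⟨c ^ 2, heq⟩ with hdvd | hdvd
  · obtain ⟨v, u, hv, hu⟩ := exists_eq_sq_of_isCoprime_of_mul_eq_prime_mul_sq hp h.symm hn hm
      (by rw [mul_comm, heq]) hdvd
    exact Or.inr ⟨u, v, hu, hv⟩
  · exact Or.inl (exists_eq_sq_of_isCoprime_of_mul_eq_prime_mul_sq hp h hm hn heq hdvd)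

end Int

theorem sq_sub_mul_sq_ne_neg_one {p : ℕ} (hp : p % 4 = 3) (u v : ℤ) : u ^ 2 - p * v ^ 2 ≠ -1 := by
  intro h
  have hp4 : (p : ZMod 4) = 3 := by rw [← ZMod.natCast_mod, hp]; rfl
  have key : ∀ x y : ZMod 4, x ^ 2 - 3 * y ^ 2 ≠ -1 := by decide
  exact key u v (by simpa [hp4] using congrArg (Int.cast : ℤ → ZMod 4) h)

theorem sq_sub_mul_sq_ne_two {p : ℕ} (hp : p % 8 = 3) (u v : ℤ) : u ^ 2 - p * v ^ 2 ≠ 2 := by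
  intro h
  have hp8 : (p : ZMod 8) = 3 := by rw [← ZMod.natCast_mod, hp]; rfl
  have key : ∀ x y : ZMod 8, x ^ 2 - 3 * y ^ 2 ≠ 2 := by decide
  exact key u v (by simpa [hp8] using congrArg (Int.cast : ℤ → ZMod 8) h)

namespace Pell.IsFundamental

theorem even_x_of_prime_mod_four_eq_three {p : ℕ} (hp : p.Prime) (hp4 : p % 4 = 3)
    {s : Solution₁ (p : ℤ)} (hs : IsFundamental s) : Even s.x := by
  by_contra hx
  rw [Int.not_even_iff_odd] at hx
  have hy : Even s.y := by
    by_contra hy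
    rw [Int.not_even_iff_odd] at hy
    have hpodd : Odd (p : ℤ) := by rw [Int.odd_coe_nat, Nat.odd_iff]; omega
    have : Even (1 : ℤ) := s.prop ▸ hx.pow.sub_odd (hpodd.mul hy.pow)
    exact Int.not_even_one this
  obtain ⟨m, hm⟩ := hx
  obtain ⟨c, hc⟩ := hy
  have hm1 : 1 ≤ m := by have := hs.1; omega
  have heq : m * (m + 1) = p * c ^ 2 := by
    have h := s.prop
    rw [hm, hc] at h
    linarith
  rcases Int.exists_eq_sq_or_of_isCoprime_of_mul_eq_prime_mul_sq hp ⟨-1, 1, by ring⟩ (by omega)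
      (by omega) heq with ⟨u, v, hu, hv⟩ | ⟨u, v, hu, hv⟩
  · exact sq_sub_mul_sq_ne_neg_one hp4 u v (by linear_combination hv - hu)
  · have hv1 : 1 < |v| := by nlinarith [abs_nonneg v, sq_abs v]
    have hsol : |v| ^ 2 - p * u ^ 2 = 1 := by rw [sq_abs]; linear_combination hu - hv
    have hle : s.x ≤ (Solution₁.mk |v| u hsol).x := hs.2.2 hv1
    rw [Solution₁.x_mk] at hle
    nlinarith [sq_abs v]

end Pell.IsFundamental

theorem pell_neg_two_of_prime_three_mod_eight (p : ℕ) (hp : p.Prime) (hmod : p % 8 = 3) :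
    ∃ x y : ℤ, x ^ 2 - (p : ℤ) * y ^ 2 = -2 := by
  obtain ⟨s, hs⟩ := Pell.IsFundamental.exists_of_not_isSquare (by exact_mod_cast hp.pos)
    (Nat.prime_iff_prime_int.mp hp).not_isSquare
  obtain ⟨m, hm⟩ := hs.even_x_of_prime_mod_four_eq_three hp (by omega)
  have heq : (s.x - 1) * (s.x + 1) = p * s.y ^ 2 := by linear_combination s.prop
  have hco : IsCoprime (s.x - 1) (s.x + 1) := ⟨m, 1 - m, by rw [hm]; ring⟩
  rcases Int.exists_eq_sq_or_of_isCoprime_of_mul_eq_prime_mul_sq hp hco (by linarith [hs.1])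
      (by linarith [hs.1]) heq with ⟨u, v, hu, hv⟩ | ⟨u, v, hu, hv⟩
  · exact ⟨u, v, by linear_combination hv - hu⟩
  · exact absurd (by linear_combination hu - hv) (sq_sub_mul_sq_ne_two hmod v u)
end

section
/- Let p be a prime with p ≡ 3 (mod 8) and let (x₀, y₀) be an integer solution of x² − p·y² = −2. Then the two elements (x₀ + y₀√(−p))/2 and (x₀ − y₀√(−p))/2 are algebraic integers in ℚ(√(−p)) whose squares sum to −1. -/
open Polynomial

theorem isIntegral_of_sq_sub_mul_add_eq_zero {A : Type*} [CommRing A] {t : A} (a b : ℤ)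
    (ht : t ^ 2 - a * t + b = 0) : IsIntegral ℤ t :=
  ⟨X ^ 2 - C a * X + C b, by monicity!, by
    simp only [eval₂_add, eval₂_sub, eval₂_pow, eval₂_mul, eval₂_X, eval₂_C]
    simpa using ht⟩

/-- `x` and `y` are forced to be odd, so `d ≡ 3 [ZMOD 4]` makes `x ^ 2 + d * y ^ 2 ≡ 0`. -/
theorem four_dvd_sq_add_mul_sq_of_sq_sub_mul_sq_eq_neg_two {d x y : ℤ} (hd : d % 4 = 3)
    (h : x ^ 2 - d * y ^ 2 = -2) : 4 ∣ x ^ 2 + d * y ^ 2 := by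
  have hd4 : (d : ZMod 4) = 3 := by
    have hmod : ((d % 4 : ℤ) : ZMod 4) = d := mod_cast ZMod.intCast_mod d 4
    rw [← hmod, hd]
    rfl
  have h4 : (x : ZMod 4) ^ 2 - 3 * (y : ZMod 4) ^ 2 = -2 := by
    simpa [hd4] using congrArg (Int.cast : ℤ → ZMod 4) h
  have key : ∀ a b : ZMod 4, a ^ 2 - 3 * b ^ 2 = -2 → a ^ 2 + 3 * b ^ 2 = 0 := by decide
  refine mod_cast (ZMod.intCast_zmod_eq_zero_iff_dvd _ 4).mp ?_
  push_cast [hd4]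
  exact key _ _ h4

theorem isIntegral_half_add_mul_of_sq_eq_neg {K : Type*} [Field K] [CharZero K] {s : K} {d : ℤ}
    (hs : s ^ 2 = -d) {x y : ℤ} (hdvd : 4 ∣ x ^ 2 + d * y ^ 2) :
    IsIntegral ℤ ((x + y * s) / 2) := by
  obtain ⟨n, hn⟩ := hdvd
  have hn' : (x : K) ^ 2 + d * y ^ 2 = 4 * n := by exact_mod_cast hn
  exact isIntegral_of_sq_sub_mul_add_eq_zero x n
    (by linear_combination ((y : K) ^ 2 / 4) * hs - (1 / 4 : K) * hn')

theorem half_elements_integral_and_squares_sum_neg_one_general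
    (p : ℕ) (hmod : p % 8 = 3) (s : ℂ) (hs : s ^ 2 = -(p : ℂ))
    (x₀ y₀ : ℤ) (hsol : x₀ ^ 2 - (p : ℤ) * y₀ ^ 2 = -2) :
    ((x₀ + y₀ * s) / 2 ∈ IntermediateField.adjoin ℚ {s} ∧
      (x₀ - y₀ * s) / 2 ∈ IntermediateField.adjoin ℚ {s}) ∧
    IsIntegral ℤ ((x₀ + y₀ * s) / 2 : ℂ) ∧ IsIntegral ℤ ((x₀ - y₀ * s) / 2 : ℂ) ∧
    ((x₀ + y₀ * s) / 2 : ℂ) ^ 2 + ((x₀ - y₀ * s) / 2 : ℂ) ^ 2 = -1 := by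
  have hdvd := four_dvd_sq_add_mul_sq_of_sq_sub_mul_sq_eq_neg_two (by omega) hsol
  have hs' : s ^ 2 = -((p : ℤ) : ℂ) := mod_cast hs
  have hs_neg : (-s) ^ 2 = -((p : ℤ) : ℂ) := by rw [neg_sq, hs']
  have hsK := IntermediateField.mem_adjoin_simple_self ℚ s
  have hsol' : (x₀ : ℂ) ^ 2 - p * y₀ ^ 2 = -2 := mod_cast hsol
  refine ⟨⟨?_, ?_⟩, isIntegral_half_add_mul_of_sq_eq_neg hs' hdvd, ?_, ?_⟩
  · exact div_mem (add_mem (intCast_mem _ _) (mul_mem (intCast_mem _ _) hsK)) (ofNat_mem _ 2)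
  · exact div_mem (sub_mem (intCast_mem _ _) (mul_mem (intCast_mem _ _) hsK)) (ofNat_mem _ 2)
  · simpa [sub_eq_add_neg] using isIntegral_half_add_mul_of_sq_eq_neg hs_neg hdvd
  · linear_combination ((y₀ : ℂ) ^ 2 / 2) * hs + hsol' / 2

theorem half_elements_integral_and_squares_sum_neg_one
    (p : ℕ) (hp : p.Prime) (hmod : p % 8 = 3) (s : ℂ) (hs : s ^ 2 = -(p : ℂ))
    (x₀ y₀ : ℤ) (hsol : x₀ ^ 2 - (p : ℤ) * y₀ ^ 2 = -2) :
    ((x₀ + y₀ * s) / 2 ∈ IntermediateField.adjoin ℚ {s} ∧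
      (x₀ - y₀ * s) / 2 ∈ IntermediateField.adjoin ℚ {s}) ∧
    IsIntegral ℤ ((x₀ + y₀ * s) / 2 : ℂ) ∧ IsIntegral ℤ ((x₀ - y₀ * s) / 2 : ℂ) ∧
    ((x₀ + y₀ * s) / 2 : ℂ) ^ 2 + ((x₀ - y₀ * s) / 2 : ℂ) ^ 2 = -1 :=
  half_elements_integral_and_squares_sum_neg_one_general p hmod s hs x₀ y₀ hsol
end

section
/- Let p be a prime with p ≢ 7 (mod 8). Then the equation x² + y² = −1 has a solution with x, y in the ring of integers of ℚ(√(−p)). -/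
/-!
Legendre's argument. A solution of `a² - p b² = -1` gives `(b √-p)² + a² = -1`; a solution of
`a² - p b² = -2` with `a` odd gives `u = (a + b √-p) / 2`, a root of `X² - a X + (a² + 1) / 2`,
with `u² + (a - u)² = -1`. For odd `p`, let `(x, y)` be the fundamental solution of
`x² - p y² = 1`. If `x` is even, the coprime factors of `(x - 1)(x + 1) = p y²` are a square and
`p` times a square, which gives odd `a, b` with `a² - p b² = ±2`. If `x` is odd, the same holds for
`((x - 1) / 2)((x + 1) / 2) = p (y / 2)²`, which gives either a smaller solution of Pell's equation
or `a² - p b² = -1`. Congruences mod 8, and `-1` being a non-square mod `p ≡ 3 (mod 4)`, decide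
which case occurs: `-1` for `p ≡ 1 (mod 4)`, `-2` for `p ≡ 3 (mod 8)`.
-/

open Polynomial in
theorem isIntegral_of_sq_eq_mul_add {R A : Type*} [CommRing R] [Ring A] [Algebra R A] {x : A}
    (b c : R) (h : x ^ 2 = algebraMap R A b * x + algebraMap R A c) : IsIntegral R x :=
  ⟨X ^ 2 - C b * X - C c, by monicity!, by simp [h]⟩

theorem Int.exists_sq_of_isCoprime_of_nonneg {m n k : ℤ} (hmn : IsCoprime m n) (hm : 0 ≤ m)
    (h : m * n = k ^ 2) : ∃ a, m = a ^ 2 := by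
  obtain ⟨a, ha | ha⟩ := Int.sq_of_isCoprime hmn h
  · exact ⟨a, ha⟩
  · exact ⟨0, by nlinarith [sq_nonneg a]⟩

theorem Int.exists_eq_prime_mul_sq_of_dvd {p : ℕ} (hp : p.Prime) {m n k : ℤ} (hmn : IsCoprime m n)
    (hm : 0 ≤ m) (hn : 0 ≤ n) (h : m * n = p * k ^ 2) (hpm : (p : ℤ) ∣ m) :
    ∃ a b, m = p * a ^ 2 ∧ n = b ^ 2 := by
  obtain ⟨m', rfl⟩ := hpm
  have hp0 : (0 : ℤ) < p := mod_cast hp.pos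
  have hm'n : m' * n = k ^ 2 := mul_left_cancel₀ hp0.ne' (by rw [← mul_assoc, h])
  obtain ⟨a, rfl⟩ := Int.exists_sq_of_isCoprime_of_nonneg hmn.of_mul_left_right
    ((mul_nonneg_iff_of_pos_left hp0).mp hm) hm'n
  obtain ⟨b, rfl⟩ := Int.exists_sq_of_isCoprime_of_nonneg hmn.of_mul_left_right.symm hn
    (by rw [mul_comm, hm'n])
  exact ⟨a, b, rfl, rfl⟩

theorem Int.eq_prime_mul_sq_or_of_isCoprime {p : ℕ} (hp : p.Prime) {m n k : ℤ}
    (hmn : IsCoprime m n) (hm : 0 ≤ m) (hn : 0 ≤ n) (h : m * n = p * k ^ 2) :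
    (∃ a b, m = p * a ^ 2 ∧ n = b ^ 2) ∨ ∃ a b, m = a ^ 2 ∧ n = p * b ^ 2 := by
  rcases (Nat.prime_iff_prime_int.mp hp).dvd_mul.mp ⟨k ^ 2, h⟩ with hpm | hpn
  · exact .inl (exists_eq_prime_mul_sq_of_dvd hp hmn hm hn h hpm)
  · obtain ⟨b, a, hn, hm⟩ :=
      exists_eq_prime_mul_sq_of_dvd hp hmn.symm hn hm (by rw [mul_comm, h]) hpn
    exact .inr ⟨a, b, hm, hn⟩

theorem Int.sq_sub_mul_sq_modEq_of_odd {a b : ℤ} (c : ℤ) (ha : Odd a) (hb : Odd b) :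
    a ^ 2 - c * b ^ 2 ≡ 1 - c [ZMOD 8] := by
  rw [Int.modEq_iff_dvd, show 1 - c - (a ^ 2 - c * b ^ 2) = c * (b ^ 2 - 1) - (a ^ 2 - 1) by ring]
  exact dvd_sub ((Int.eight_dvd_sq_sub_one_of_odd hb).mul_left c)
    (Int.eight_dvd_sq_sub_one_of_odd ha)

theorem exists_odd_sq_sub_mul_sq_eq_two_or_neg_two_of_pell_of_even {p : ℕ} (hp : p.Prime)
    {x y : ℤ} (hxy : x ^ 2 - p * y ^ 2 = 1) (hx : 0 < x) (hx_even : Even x) :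
    ∃ a b : ℤ, Odd a ∧ Odd b ∧ (a ^ 2 - p * b ^ 2 = 2 ∨ a ^ 2 - p * b ^ 2 = -2) := by
  obtain ⟨k, rfl⟩ := hx_even
  have hodd : ∀ {c : ℤ}, Odd (c ^ 2) → Odd c := (Int.odd_pow' two_ne_zero).mp
  rcases Int.eq_prime_mul_sq_or_of_isCoprime hp (m := 2 * k - 1) (n := 2 * k + 1) (k := y)
    ⟨k, 1 - k, by ring⟩ (by omega) (by omega) (by linear_combination hxy) with
    ⟨a, b, ha, hb⟩ | ⟨a, b, ha, hb⟩
  · refine ⟨b, a, hodd ⟨k, by rw [← hb]⟩, hodd (Int.odd_mul.mp ⟨k - 1, by rw [← ha]; ring⟩).2,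
      .inl (by linear_combination ha - hb)⟩
  · refine ⟨a, b, hodd ⟨k - 1, by rw [← ha]; ring⟩, hodd (Int.odd_mul.mp ⟨k, by rw [← hb]⟩).2,
      .inr (by linear_combination hb - ha)⟩

theorem Pell.IsFundamental.exists_sq_sub_mul_sq_eq_neg_one_of_odd {p : ℕ} (hp : p.Prime)
    (hp2 : p ≠ 2) {u : Pell.Solution₁ p} (hu : Pell.IsFundamental u) (hx : Odd u.x) :
    ∃ a b : ℤ, a ^ 2 - p * b ^ 2 = -1 := by
  obtain ⟨k, hk⟩ := hx
  have hxy := u.prop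
  have hy : Even u.y := by
    have : Even ((p : ℤ) * u.y ^ 2) :=
      ⟨2 * k ^ 2 + 2 * k, by rw [hk] at hxy; linear_combination -hxy⟩
    rcases Int.even_mul.mp this with hp_even | hy
    · exact absurd (Int.even_coe_nat p |>.mp hp_even) (hp.even_iff.not.mpr hp2)
    · exact (Int.even_pow' two_ne_zero).mp hy
  obtain ⟨l, hl⟩ := hy
  have hk1 : 1 ≤ k := by have := hu.1; omega
  rcases Int.eq_prime_mul_sq_or_of_isCoprime hp (m := k) (n := k + 1) (k := l)
    ⟨-1, 1, by ring⟩ (by omega) (by omega)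
    (mul_left_cancel₀ four_ne_zero (by rw [hk, hl] at hxy; linear_combination hxy)) with
    ⟨a, b, ha, hb⟩ | ⟨a, b, ha, hb⟩
  · -- `(|b|, a)` would be a solution with `1 < |b| < x`
    exfalso
    have hb1 : 1 < |b| := by nlinarith [sq_abs b, abs_nonneg b]
    have hbx : |b| < u.x := by nlinarith [sq_abs b, abs_nonneg b]
    have := hu.2.2 (show 1 < (Pell.Solution₁.mk |b| a
      (by rw [sq_abs]; linear_combination ha - hb)).x by simpa using hb1)
    rw [Pell.Solution₁.x_mk] at this
    omega
  · exact ⟨a, b, by linear_combination hb - ha⟩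

theorem Nat.Prime.neg_pell_or_odd_sq_sub_mul_sq_eq_two_or_neg_two {p : ℕ} (hp : p.Prime)
    (hp2 : p ≠ 2) : (∃ a b : ℤ, a ^ 2 - p * b ^ 2 = -1) ∨
      ∃ a b : ℤ, Odd a ∧ Odd b ∧ (a ^ 2 - p * b ^ 2 = 2 ∨ a ^ 2 - p * b ^ 2 = -2) := by
  obtain ⟨u, hu⟩ := Pell.IsFundamental.exists_of_not_isSquare (d := p) (mod_cast hp.pos)
    (Nat.prime_iff_prime_int.mp hp).not_isSquare
  rcases Int.even_or_odd u.x with hx | hx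
  · exact .inr (exists_odd_sq_sub_mul_sq_eq_two_or_neg_two_of_pell_of_even hp u.prop hu.x_pos hx)
  · exact .inl (hu.exists_sq_sub_mul_sq_eq_neg_one_of_odd hp hp2 hx)

theorem Nat.Prime.mod_four_ne_three_of_sq_sub_mul_sq_eq_neg_one {p : ℕ} (hp : p.Prime) {a b : ℤ}
    (h : a ^ 2 - p * b ^ 2 = -1) : p % 4 ≠ 3 :=
  have : Fact p.Prime := ⟨hp⟩
  ZMod.exists_sq_eq_neg_one_iff.mp
    ⟨a, by simpa [sq] using (congrArg (Int.cast : ℤ → ZMod p) h).symm⟩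

theorem Nat.Prime.exists_sq_sub_mul_sq_eq_neg_one {p : ℕ} (hp : p.Prime) (hp4 : p % 4 ≠ 3) :
    ∃ a b : ℤ, a ^ 2 - p * b ^ 2 = -1 := by
  rcases eq_or_ne p 2 with rfl | hp2
  · exact ⟨1, 1, by norm_num⟩
  rcases hp.neg_pell_or_odd_sq_sub_mul_sq_eq_two_or_neg_two hp2 with h | ⟨a, b, ha, hb, hab⟩
  · exact h
  · have hmod := Int.sq_sub_mul_sq_modEq_of_odd p ha hb
    have hp_odd := Nat.odd_iff.mp (hp.odd_of_ne_two hp2)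
    rcases hab with h | h <;> rw [h] at hmod <;> unfold Int.ModEq at hmod <;> omega

theorem Nat.Prime.exists_odd_sq_sub_mul_sq_eq_neg_two {p : ℕ} (hp : p.Prime) (hp8 : p % 8 = 3) :
    ∃ a b : ℤ, Odd a ∧ a ^ 2 - p * b ^ 2 = -2 := by
  rcases hp.neg_pell_or_odd_sq_sub_mul_sq_eq_two_or_neg_two (by omega) with
    ⟨a, b, hab⟩ | ⟨a, b, ha, hb, hab | hab⟩
  · exact absurd (by omega) (hp.mod_four_ne_three_of_sq_sub_mul_sq_eq_neg_one hab)
  · have hmod := Int.sq_sub_mul_sq_modEq_of_odd p ha hb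
    rw [hab] at hmod
    unfold Int.ModEq at hmod
    omega
  · exact ⟨a, b, ha, hab⟩

section

variable {L : Type*} [Field L] [CharZero L] {d : ℤ} {s : L}

open IntermediateField

theorem exists_sq_add_sq_eq_neg_one_of_sq_sub_mul_sq_eq_neg_one (hs : s ^ 2 = -d) {a b : ℤ}
    (h : a ^ 2 - d * b ^ 2 = -1) :
    ∃ u v : L, u ∈ ℚ⟮s⟯ ∧ v ∈ ℚ⟮s⟯ ∧ IsIntegral ℤ u ∧ IsIntegral ℤ v ∧ u ^ 2 + v ^ 2 = -1 := by
  have h' : (a : L) ^ 2 - d * (b : L) ^ 2 = -1 := mod_cast h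
  have hs_int : IsIntegral ℤ s := isIntegral_of_sq_eq_mul_add 0 (-d) (by simp [hs])
  exact ⟨b * s, a, mul_mem (intCast_mem _ b) (mem_adjoin_simple_self ℚ s), intCast_mem _ a,
    (isIntegral_algebraMap (x := b)).mul hs_int, isIntegral_algebraMap (x := a),
    by linear_combination (b : L) ^ 2 * hs + h'⟩

theorem exists_sq_add_sq_eq_neg_one_of_sq_sub_mul_sq_eq_neg_two (hs : s ^ 2 = -d) {a b : ℤ}
    (ha : Odd a) (h : a ^ 2 - d * b ^ 2 = -2) :
    ∃ u v : L, u ∈ ℚ⟮s⟯ ∧ v ∈ ℚ⟮s⟯ ∧ IsIntegral ℤ u ∧ IsIntegral ℤ v ∧ u ^ 2 + v ^ 2 = -1 := by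
  obtain ⟨k, hk⟩ := ha
  have h' : (a : L) ^ 2 - d * (b : L) ^ 2 = -2 := mod_cast h
  have hk' : (a : L) = 2 * k + 1 := mod_cast hk
  set u : L := (a + b * s) / 2 with hu
  have hu_sq : u ^ 2 = a * u - (2 * k ^ 2 + 2 * k + 1) := by
    rw [hu]; field_simp; linear_combination (b : L) ^ 2 * hs + h' - 2 * (a + 2 * k + 1) * hk'
  have hu_mem : u ∈ ℚ⟮s⟯ := div_mem (add_mem (intCast_mem _ a)
    (mul_mem (intCast_mem _ b) (mem_adjoin_simple_self ℚ s))) (ofNat_mem _ 2)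
  have hu_int : IsIntegral ℤ u :=
    isIntegral_of_sq_eq_mul_add a (-(2 * k ^ 2 + 2 * k + 1))
      (by rw [hu_sq, algebraMap_int_eq, eq_intCast, eq_intCast]; push_cast; ring)
  exact ⟨u, a - u, hu_mem, sub_mem (intCast_mem _ a) hu_mem, hu_int,
    (isIntegral_algebraMap (x := a)).sub hu_int,
    by linear_combination 2 * hu_sq + (a + 2 * k + 1) * hk'⟩

end

theorem neg_one_sum_two_squares_of_not_seven_mod_eight (p : ℕ) (hp : p.Prime)
    (hmod : p % 8 ≠ 7) (s : ℂ) (hs : s ^ 2 = -(p : ℂ)) :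
    ∃ u v : ℂ, u ∈ IntermediateField.adjoin ℚ {s} ∧ v ∈ IntermediateField.adjoin ℚ {s} ∧
      IsIntegral ℤ u ∧ IsIntegral ℤ v ∧ u ^ 2 + v ^ 2 = -1 := by
  have hs' : s ^ 2 = -((p : ℤ) : ℂ) := by rw [hs, Int.cast_natCast]
  by_cases hp4 : p % 4 = 3
  · obtain ⟨a, b, ha, hab⟩ := hp.exists_odd_sq_sub_mul_sq_eq_neg_two (by omega)
    exact exists_sq_add_sq_eq_neg_one_of_sq_sub_mul_sq_eq_neg_two hs' ha hab
  · obtain ⟨a, b, hab⟩ := hp.exists_sq_sub_mul_sq_eq_neg_one hp4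
    exact exists_sq_add_sq_eq_neg_one_of_sq_sub_mul_sq_eq_neg_one hs' hab
end

section
/- Let p be a prime with p ≡ 3 (mod 4) and let (x₀, y₀) be an integer solution of x² − p·y² = ±2 (one of the two equations is solvable). Set A = (x₀² + p·y₀²)/2 and B = x₀·y₀. Then A, B are integers, B is odd, and A² − p·B² = 1. -/
/-! The norm of `(x₀ + y₀√p)² / 2` is `(x₀² - p y₀²)² / 4 = 1`, and its coordinates are `A` and
`B = x₀ y₀`. A solution of `x² - p y² = ±2` with `p` odd has `x₀ ≡ y₀ (mod 2)`, and both cannot be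
even since then `4` would divide `±2`; so `B` is odd. -/

theorem Int.odd_and_odd_of_sq_sub_mul_sq_eq_two {n x y : ℤ} (hn : Odd n)
    (h : x ^ 2 - n * y ^ 2 = 2 ∨ x ^ 2 - n * y ^ 2 = -2) : Odd x ∧ Odd y := by
  have heven : Even (x ^ 2 - n * y ^ 2) := by
    rcases h with h | h <;> rw [h] <;> decide
  have hxy : Even x ↔ Even y := by
    simpa [Int.even_sub, Int.even_mul, Int.even_pow, Int.not_even_iff_odd.mpr hn] using heven
  suffices hx : Odd x from ⟨hx, Int.not_even_iff_odd.mp (hxy.not.mp (Int.not_even_iff_odd.mpr hx))⟩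
  by_contra hx
  obtain ⟨m, rfl⟩ := Int.not_odd_iff_even.mp hx
  obtain ⟨k, rfl⟩ := hxy.mp ⟨m, rfl⟩
  have h4 : (4 : ℤ) ∣ (m + m) ^ 2 - n * (k + k) ^ 2 := ⟨m ^ 2 - n * k ^ 2, by ring⟩
  rcases h with h | h <;> rw [h] at h4 <;> norm_num at h4

theorem Int.exists_sq_sub_mul_sq_eq_one_of_sq_sub_mul_sq_eq_two {n x y : ℤ}
    (h : x ^ 2 - n * y ^ 2 = 2 ∨ x ^ 2 - n * y ^ 2 = -2) :
    ∃ A : ℤ, 2 * A = x ^ 2 + n * y ^ 2 ∧ A ^ 2 - n * (x * y) ^ 2 = 1 := by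
  rcases h with h | h
  · exact ⟨n * y ^ 2 + 1, by linarith, by linear_combination (-n * y ^ 2) * h⟩
  · exact ⟨n * y ^ 2 - 1, by linarith, by linear_combination (-n * y ^ 2) * h⟩

theorem norm_one_unit_from_pell_two_general (p : ℕ) (hmod : p % 4 = 3)
    (x₀ y₀ : ℤ) (hsol : x₀ ^ 2 - (p : ℤ) * y₀ ^ 2 = 2 ∨ x₀ ^ 2 - (p : ℤ) * y₀ ^ 2 = -2) :
    ∃ A : ℤ, 2 * A = x₀ ^ 2 + (p : ℤ) * y₀ ^ 2 ∧ Odd (x₀ * y₀) ∧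
      A ^ 2 - (p : ℤ) * (x₀ * y₀) ^ 2 = 1 := by
  have hp : Odd (p : ℤ) := by exact_mod_cast Nat.odd_iff.mpr (by omega)
  obtain ⟨hx, hy⟩ := Int.odd_and_odd_of_sq_sub_mul_sq_eq_two hp hsol
  obtain ⟨A, hA, hnorm⟩ := Int.exists_sq_sub_mul_sq_eq_one_of_sq_sub_mul_sq_eq_two hsol
  exact ⟨A, hA, hx.mul hy, hnorm⟩

theorem norm_one_unit_from_pell_two (p : ℕ) (hp : p.Prime) (hmod : p % 4 = 3)
    (x₀ y₀ : ℤ) (hsol : x₀ ^ 2 - (p : ℤ) * y₀ ^ 2 = 2 ∨ x₀ ^ 2 - (p : ℤ) * y₀ ^ 2 = -2) :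
    ∃ A : ℤ, 2 * A = x₀ ^ 2 + (p : ℤ) * y₀ ^ 2 ∧ Odd (x₀ * y₀) ∧
      A ^ 2 - (p : ℤ) * (x₀ * y₀) ^ 2 = 1 :=
  norm_one_unit_from_pell_two_general p hmod x₀ y₀ hsol
end
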